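/- For every complex number B and every s in (0,1), the average (1/2)∫_{-1}^{1} |V - B|^{-s} dV is at most 1/(1-s). -/

import Mathlib

/-!
Since `‖V - B‖ ≥ |V - Re B|` and `t ↦ t ^ (-s)` is decreasing, it suffices to bound
`∫ u in a..a + 2, |u| ^ (-s)` for real `a`. Writing `p = 1 - s`, this integral is
`((a + 2) ^ p - a ^ p) / p` when `0 ≤ a` (the case `a + 2 ≤ 0` is its mirror image), and
`(|a| ^ p + (a + 2) ^ p) / p` when the interval contains `0`. Subadditivity, respectively
concavity, of `x ↦ x ^ p` bounds the numerator by `2`.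
-/

open MeasureTheory Set intervalIntegral

lemma Real.rpow_add_rpow_le_two_mul_add_div_two_rpow {p x y : ℝ} (hp₀ : 0 ≤ p) (hp₁ : p ≤ 1)
    (hx : 0 ≤ x) (hy : 0 ≤ y) : x ^ p + y ^ p ≤ 2 * ((x + y) / 2) ^ p := by
  have h := (Real.concaveOn_rpow hp₀ hp₁).2 (mem_Ici.2 hx) (mem_Ici.2 hy)
    (by norm_num : (0:ℝ) ≤ 1 / 2) (by norm_num : (0:ℝ) ≤ 1 / 2) (by norm_num)
  rw [smul_eq_mul, smul_eq_mul, smul_eq_mul, smul_eq_mul,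
    show (1 / 2 : ℝ) * x + 1 / 2 * y = (x + y) / 2 by ring] at h
  linarith

lemma Complex.norm_rpow_le_abs_re_rpow {z : ℂ} {r : ℝ} (hz : z.re ≠ 0) (hr : r ≤ 0) :
    ‖z‖ ^ r ≤ |z.re| ^ r :=
  Real.rpow_le_rpow_of_nonpos (abs_pos.2 hz) (Complex.abs_re_le_norm z) hr

section AbsRpow

variable {r : ℝ}

lemma integral_abs_rpow_neg_neg (a b : ℝ) :
    ∫ u in -b..-a, |u| ^ r = ∫ u in a..b, |u| ^ r := by
  simpa using (integral_comp_neg (a := a) (b := b) fun u : ℝ ↦ |u| ^ r).symm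

lemma intervalIntegrable_abs_rpow (hr : -1 < r) (a b : ℝ) :
    IntervalIntegrable (fun u : ℝ ↦ |u| ^ r) volume a b := by
  have hpos : ∀ c, 0 ≤ c → IntervalIntegrable (fun u : ℝ ↦ |u| ^ r) volume 0 c := fun c hc ↦
    (intervalIntegrable_rpow' hr).congr fun u hu ↦ by
      rw [uIoc_of_le hc] at hu
      simp only [abs_of_pos hu.1]
  have hall : ∀ c, IntervalIntegrable (fun u : ℝ ↦ |u| ^ r) volume 0 c := by
    intro c
    rcases le_total 0 c with hc | hc
    · exact hpos c hc
    · rw [IntervalIntegrable.iff_comp_neg]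
      simpa using hpos (-c) (neg_nonneg.2 hc)
  exact (hall a).symm.trans (hall b)

lemma integral_abs_rpow_of_nonneg (hr : -1 < r) {c : ℝ} (hc : 0 ≤ c) :
    ∫ u in (0:ℝ)..c, |u| ^ r = c ^ (r + 1) / (r + 1) := by
  rw [integral_congr (g := fun u ↦ u ^ r) fun u hu ↦ by
      rw [uIcc_of_le hc] at hu
      simp only [abs_of_nonneg hu.1],
    integral_rpow (Or.inl hr), Real.zero_rpow (by linarith), sub_zero]

lemma integral_abs_rpow_add_le_of_nonneg (hr₀ : -1 < r) (hr₁ : r ≤ 0) {a ℓ : ℝ} (ha : 0 ≤ a)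
    (hℓ : 0 ≤ ℓ) : ∫ u in a..a + ℓ, |u| ^ r ≤ 2 * (ℓ / 2) ^ (r + 1) / (r + 1) := by
  have hp₀ : 0 ≤ r + 1 := by linarith
  have hp₁ : r + 1 ≤ 1 := by linarith
  rw [← integral_interval_sub_left (intervalIntegrable_abs_rpow hr₀ 0 _)
      (intervalIntegrable_abs_rpow hr₀ 0 a), integral_abs_rpow_of_nonneg hr₀ (by linarith),
    integral_abs_rpow_of_nonneg hr₀ ha, ← sub_div]
  gcongr
  have hsub := Real.rpow_add_le_add_rpow ha hℓ hp₀ hp₁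
  have hhalf := Real.rpow_add_le_add_rpow (by positivity : 0 ≤ ℓ / 2)
    (by positivity : 0 ≤ ℓ / 2) hp₀ hp₁
  rw [add_halves] at hhalf
  linarith

/-- An interval of length `ℓ` carries at most the mass `∫ u in -(ℓ/2)..ℓ/2, |u| ^ r`. -/
lemma integral_abs_rpow_add_le (hr₀ : -1 < r) (hr₁ : r ≤ 0) (a : ℝ) {ℓ : ℝ} (hℓ : 0 ≤ ℓ) :
    ∫ u in a..a + ℓ, |u| ^ r ≤ 2 * (ℓ / 2) ^ (r + 1) / (r + 1) := by
  rcases le_total 0 a with ha | ha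
  · exact integral_abs_rpow_add_le_of_nonneg hr₀ hr₁ ha hℓ
  rcases le_total (a + ℓ) 0 with haℓ | haℓ
  · rw [← integral_abs_rpow_neg_neg, show -a = -(a + ℓ) + ℓ by ring]
    exact integral_abs_rpow_add_le_of_nonneg hr₀ hr₁ (neg_nonneg.2 haℓ) hℓ
  · rw [← integral_add_adjacent_intervals (b := 0) (intervalIntegrable_abs_rpow hr₀ _ _)
        (intervalIntegrable_abs_rpow hr₀ _ _), ← integral_abs_rpow_neg_neg a 0, neg_zero,
      integral_abs_rpow_of_nonneg hr₀ (neg_nonneg.2 ha), integral_abs_rpow_of_nonneg hr₀ haℓ,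
      ← add_div]
    have hp₀ : 0 ≤ r + 1 := by linarith
    gcongr
    simpa using Real.rpow_add_rpow_le_two_mul_add_div_two_rpow hp₀ (by linarith)
      (neg_nonneg.2 ha) haℓ

lemma integral_norm_sub_rpow_le_integral_abs_sub_re_rpow (hr₀ : -1 < r) (hr₁ : r ≤ 0)
    (B : ℂ) {a b : ℝ} (hab : a ≤ b) :
    ∫ V in a..b, ‖(V:ℂ) - B‖ ^ r ≤ ∫ V in a..b, |V - B.re| ^ r := by
  rw [integral_of_le hab, integral_of_le hab]
  refine integral_mono_of_nonneg (ae_of_all _ fun V ↦ by positivity) ?_ (ae_restrict_of_ae ?_)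
  · have h := (intervalIntegrable_abs_rpow hr₀ (a - B.re) (b - B.re)).comp_sub_right B.re
    rw [sub_add_cancel, sub_add_cancel] at h
    exact h.1
  · filter_upwards [compl_mem_ae_iff.2 (measure_singleton B.re)] with V hV
    simpa using Complex.norm_rpow_le_abs_re_rpow (z := V - B) (by simpa [sub_eq_zero] using hV) hr₁

end AbsRpow

theorem fractional_moment_bound (B : ℂ) (s : ℝ) (hs : s ∈ Set.Ioo (0:ℝ) 1) :
    (1/2) * ∫ V in (-1:ℝ)..1, ‖(V:ℂ) - B‖ ^ (-s) ≤ 1/(1-s) := by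
  obtain ⟨hs₀, hs₁⟩ := hs
  have hr₀ : -1 < -s := by linarith
  have hr₁ : -s ≤ 0 := by linarith
  have hbound := integral_abs_rpow_add_le hr₀ hr₁ (-1 - B.re) zero_le_two
  rw [show -1 - B.re + 2 = 1 - B.re by ring, ← integral_comp_sub_right] at hbound
  calc (1/2) * ∫ V in (-1:ℝ)..1, ‖(V:ℂ) - B‖ ^ (-s)
      ≤ (1/2) * (2 * (2 / 2) ^ (-s + 1) / (-s + 1)) := by
        gcongr
        exact (integral_norm_sub_rpow_le_integral_abs_sub_re_rpow hr₀ hr₁ B (by norm_num)).trans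
          hbound
    _ = 1/(1-s) := by rw [div_self two_ne_zero, Real.one_rpow]; ring
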